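/- Define E(n) in tCH2 by E(n) = sum over T in RV_{n;2} of sgn(T) * th_{val(T)}, where sgn(T) = 1 for height 0 and sgn((l,T1,T2,T3)) = sgn(val(T2)+1)*sgn(T1)*sgn(T2)*sgn(T3). Define terr(0,0) = th_2, terr(0,1) = th_1, terr(n+1,0) = (terr(n,0)^2 - terr(n,1)^2)*terr(n,0), terr(n+1,1) = (2*terr(n,0)^2 - th_1*terr(n,1)*terr(n,0))*terr(n,1). Then for every n >= 0, terr(n,0) is congruent to E(n) modulo Ker(L), and terr(n,1) is congruent to S_{-1}(E(n)) modulo Ker(L), where S_{-1} is the linear shift operator th_i -> th_{i-1}. -/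

import Mathlib

def tau (i : ℤ) : ℤ := |i + 1| - 1

/-- Basis element `th_i` of the free ℤ-module `tCH2 = ℤ →₀ ℤ`. -/
noncomputable def th (i : ℤ) : ℤ →₀ ℤ := Finsupp.single i 1

/-- Product of basis elements of `tCH2`:
`th_{-1} th_j = 0`; `th_i th_j = ∑_{k=0}^i th_{j-i+2k}` for `i ≥ 0`;
`th_i th_j = -(th_{tau i} th_j)` for `i < -1` (note `tau i ≥ 0` there). -/
noncomputable def thMulB (i j : ℤ) : ℤ →₀ ℤ :=
  if i = -1 then 0
  else if 0 ≤ i then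
    ∑ k ∈ Finset.range (i.toNat + 1), Finsupp.single (j - i + 2 * (k : ℤ)) (1 : ℤ)
  else
    -(∑ k ∈ Finset.range ((tau i).toNat + 1),
        Finsupp.single (j - tau i + 2 * (k : ℤ)) (1 : ℤ))

/-- The bilinear extension of `thMulB` to all of `tCH2`. -/
noncomputable def tmul (x y : ℤ →₀ ℤ) : ℤ →₀ ℤ :=
  x.sum fun i a => y.sum fun j b => (a * b) • thMulB i j
/-- Plane ternary trees of height `n` with integer-labeled vertices. -/
inductive RVT : ℕ → Type
  | leaf (l : ℤ) : RVT 0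
  | node {n : ℕ} (l : ℤ) (T1 T2 T3 : RVT n) : RVT (n + 1)

/-- The value (root label) of a tree. -/
def RVT.val : ∀ {n : ℕ}, RVT n → ℤ
  | _, .leaf l => l
  | _, .node l _ _ _ => l

/-- The radius-value tree condition: all labels are even, and at each internal
vertex `(l, T1, T2, T3)` we have `|l - val T1 - val T3| ≤ tau (val T2)`. -/
def RVT.valid : ∀ {n : ℕ}, RVT n → Prop
  | _, .leaf l => Even l
  | _, .node l T1 T2 T3 =>
      Even l ∧ |l - T1.val - T3.val| ≤ tau T2.val ∧ T1.valid ∧ T2.valid ∧ T3.valid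

/-- Every leaf is labeled `2`. -/
def RVT.leaves2 : ∀ {n : ℕ}, RVT n → Prop
  | _, .leaf l => l = 2
  | _, .node _ T1 T2 T3 => T1.leaves2 ∧ T2.leaves2 ∧ T3.leaves2

/-- Membership in `RV_{n;2}`. -/
def RVT.mem2 {n : ℕ} (T : RVT n) : Prop := T.valid ∧ T.leaves2

/-- The involution `Inv`. -/
def RVT.inv : ∀ {n : ℕ}, RVT n → RVT n
  | _, .leaf l => .leaf l
  | _, .node l T1 T2 T3 =>
      .node (T1.inv.val + T3.inv.val - (l - T1.val - T3.val)) T1.inv T2 T3.inv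

/-- Basis element `h_i` of the free ℤ-module `CH2 = ℕ →₀ ℤ`. -/
noncomputable def hb (i : ℕ) : ℕ →₀ ℤ := Finsupp.single i 1

/-- Product of basis elements of `CH2`: `h_i h_j = ∑_{k=0}^{min i j} h_{|j-i|+2k}`. -/
noncomputable def hMulB (i j : ℕ) : ℕ →₀ ℤ :=
  ∑ k ∈ Finset.range (min i j + 1), Finsupp.single (max i j - min i j + 2 * k) (1 : ℤ)

/-- The bilinear extension of `hMulB` to all of `CH2`. -/
noncomputable def hmul (x y : ℕ →₀ ℤ) : ℕ →₀ ℤ :=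
  x.sum fun i a => y.sum fun j b => (a * b) • hMulB i j

/-- The linear map `L : tCH2 → CH2`, `th_i ↦ sgn(i+1) • h_{tau i}`. -/
noncomputable def Lmap (x : ℤ →₀ ℤ) : ℕ →₀ ℤ :=
  x.sum fun i a => (a * (i + 1).sign) • Finsupp.single (tau i).toNat (1 : ℤ)

/-- The sign of a radius-value tree. -/
def RVT.sgn : ∀ {n : ℕ}, RVT n → ℤ
  | _, .leaf _ => 1
  | _, .node _ T1 T2 T3 => (T2.val + 1).sign * T1.sgn * T2.sgn * T3.sgn

open scoped BigOperators in
/-- `E n = ∑_{T ∈ RV_{n;2}} sgn(T) • th_{val T}` in `tCH2`. -/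
noncomputable def E (n : ℕ) : ℤ →₀ ℤ :=
  ∑ᶠ T : {T : RVT n // T.mem2}, (T.1.sgn) • th T.1.val

/-- The shift operator `S_{-1} : th_i ↦ th_{i-1}`. -/
noncomputable def Sm1 (x : ℤ →₀ ℤ) : ℤ →₀ ℤ := Finsupp.mapDomain (fun i => i - 1) x

/-- The pair `(terr(n,0), terr(n,1))` in `tCH2`. -/
noncomputable def terr : ℕ → (ℤ →₀ ℤ) × (ℤ →₀ ℤ)
  | 0 => (th 2, th 1)
  | n + 1 =>
      (tmul (tmul (terr n).1 (terr n).1 - tmul (terr n).2 (terr n).2) (terr n).1,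
       tmul (2 • tmul (terr n).1 (terr n).1 -
         tmul (th 1) (tmul (terr n).2 (terr n).1)) (terr n).2)

/-!
Embed `CH2` into `ℤ[T;T⁻¹]` as the representation ring of `SL₂`, via the injective map
`h_m ↦ χ_m = T^m + T^(m-2) + ⋯ + T^(-m)`; then `L` followed by it sends `th_i` to
`θ_i = sgn(i+1) χ_{τ(i)}`. The Weyl character formula `(T - T⁻¹) θ_i = T^(i+1) - T^(-(i+1))`
makes `θ` multiplicative for the product of `tCH2`, and it collapses the sum over the labels
allowed at the root of a radius-value tree, so that
`θ(E(n+1)) = θ(E n) · ∑_{T₁,T₃} sgn T₁ sgn T₃ θ_{val T₁ + val T₃}`. After multiplying by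
`T - T⁻¹`, `θ(E n)`, `θ(S₋₁ E n)` and these pair sums are all expressed through
`g = ∑ sgn(T) T^(val T)` and `g(T⁻¹)`, and the recursion defining `terr` reduces to two
polynomial identities.
-/

open Finset LaurentPolynomial

section

variable {R : Type*} [CommRing R] [NoZeroDivisors R] {x y e f P Q Ω : R}

lemma sq_sub_sq_eq_of_mul_sub_eq (hxy : x * y = 1) (hd : x - y ≠ 0)
    (hP : (x - y) * P = x * e - y * f) (hQ : (x - y) * Q = e - f)
    (hΩ : (x - y) * Ω = x * e ^ 2 - y * f ^ 2) : P ^ 2 - Q ^ 2 = Ω := by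
  apply mul_left_cancel₀ (pow_ne_zero 2 hd)
  linear_combination ((x - y) * P + (x * e - y * f)) * hP - ((x - y) * Q + (e - f)) * hQ
    - (x - y) * hΩ + (e - f) ^ 2 * hxy

lemma two_mul_sub_add_mul_mul_eq_of_mul_sub_eq (hd : x - y ≠ 0)
    (hP : (x - y) * P = x * e - y * f) (hQ : (x - y) * Q = e - f)
    (hΩ : (x - y) * Ω = e ^ 2 - f ^ 2) : (2 * P - (x + y) * Q) * Q = Ω := by
  apply mul_left_cancel₀ (pow_ne_zero 2 hd)
  linear_combination (2 * (x - y) * Q) * hP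
    + (2 * (x * e - y * f) - (x + y) * ((x - y) * Q + (e - f))) * hQ - (x - y) * hΩ

end

noncomputable def weylDenom : ℤ[T;T⁻¹] := T 1 - T (-1)

noncomputable def chi (m : ℕ) : ℤ[T;T⁻¹] := ∑ k ∈ range (m + 1), T (m - 2 * k)

noncomputable def thetaChar (i : ℤ) : ℤ[T;T⁻¹] := (i + 1).sign • chi (tau i).toNat

lemma weylDenom_ne_zero : weylDenom ≠ 0 := by
  intro h
  simpa [weylDenom, sub_eq_zero] using congrArg (fun p : ℤ[T;T⁻¹] => p.coeff 1) h

lemma weylDenom_mul_T (r : ℤ) : weylDenom * T r = T (r + 1) - T (r - 1) := by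
  rw [weylDenom, sub_mul, ← T_add, ← T_add, add_comm, add_comm (-1), ← sub_eq_add_neg]

lemma weylDenom_mul_chi (m : ℕ) : weylDenom * chi m = T (m + 1) - T (-(m + 1)) := by
  have hstep : ∀ k ∈ range (m + 1), weylDenom * T ((m : ℤ) - 2 * k)
      = T ((m : ℤ) + 1 - 2 * k) - T ((m : ℤ) + 1 - 2 * ↑(k + 1)) := by
    intro k _
    rw [weylDenom_mul_T]
    push_cast
    ring_nf
  rw [chi, mul_sum, sum_congr rfl hstep,
    sum_range_sub' (fun k : ℕ => (T ((m : ℤ) + 1 - 2 * k) : ℤ[T;T⁻¹]))]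
  push_cast
  ring_nf

lemma weylDenom_mul_thetaChar (i : ℤ) : weylDenom * thetaChar i = T (i + 1) - T (-(i + 1)) := by
  rw [thetaChar, mul_smul_comm, weylDenom_mul_chi]
  rcases lt_trichotomy (i + 1) 0 with h | h | h
  · have hm : ((tau i).toNat : ℤ) + 1 = -(i + 1) := by
      rw [tau, abs_of_neg h]; omega
    rw [hm, Int.sign_eq_neg_one_of_neg h, neg_neg, neg_one_smul, neg_sub]
  · rw [h, neg_zero, sub_self, Int.sign_zero, zero_smul]
  · have hm : ((tau i).toNat : ℤ) + 1 = i + 1 := by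
      rw [tau, abs_of_pos h]; omega
    rw [hm, Int.sign_eq_one_of_pos h, one_smul]

lemma thetaChar_one : thetaChar 1 = T 1 + T (-1) := by
  simp [thetaChar, tau, chi, sum_range_succ, Int.sign_eq_one_of_pos]

lemma sum_T_string (a : ℤ) (m : ℕ) :
    ∑ k ∈ range (m + 1), (T (a - m + 2 * k) : ℤ[T;T⁻¹]) = T a * chi m := by
  rw [chi, mul_sum, ← sum_range_reflect]
  refine sum_congr rfl fun k hk => ?_
  rw [← T_add]
  congr 1
  have : k ≤ m := Nat.lt_succ_iff.1 (mem_range.1 hk)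
  push_cast [Nat.add_sub_cancel, this]
  ring

lemma sum_T_neg_string (a : ℤ) (m : ℕ) :
    ∑ k ∈ range (m + 1), (T (-(a - m + 2 * k)) : ℤ[T;T⁻¹]) = T (-a) * chi m := by
  rw [chi, mul_sum]
  exact sum_congr rfl fun k _ => by rw [← T_add]; congr 1; ring

lemma sum_thetaChar_string (c : ℤ) (m : ℕ) :
    ∑ k ∈ range (m + 1), thetaChar (c - m + 2 * k) = chi m * thetaChar c := by
  apply mul_left_cancel₀ weylDenom_ne_zero
  have hshift : ∀ k : ℕ, c - m + 2 * k + 1 = (c + 1) - m + 2 * k := fun k => by ring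
  rw [mul_sum, mul_left_comm, weylDenom_mul_thetaChar, mul_sub]
  simp only [weylDenom_mul_thetaChar, hshift, sum_sub_distrib, sum_T_string, sum_T_neg_string,
    mul_comm (chi m)]

lemma weylDenom_mul_sum_smul_thetaChar {ι : Type*} (s : Finset ι) (w v : ι → ℤ) (r : ℤ) :
    weylDenom * ∑ i ∈ s, w i • thetaChar (v i + r)
      = T (r + 1) * ∑ i ∈ s, w i • T (v i) - T (-(r + 1)) * invert (∑ i ∈ s, w i • T (v i)) := by
  simp only [mul_sum, mul_smul_comm, weylDenom_mul_thetaChar, map_sum, map_zsmul, invert_T,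
    ← sum_sub_distrib, ← smul_sub, ← T_add]
  refine sum_congr rfl fun i _ => ?_
  congr 3 <;> ring

lemma sum_smul_T_mul_sum_smul_T {ι κ : Type*} (s : Finset ι) (t : Finset κ) (w v : ι → ℤ)
    (w' v' : κ → ℤ) :
    (∑ i ∈ s, w i • T (v i) : ℤ[T;T⁻¹]) * ∑ j ∈ t, w' j • T (v' j)
      = ∑ p ∈ s ×ˢ t, (w p.1 * w' p.2) • T (v p.1 + v' p.2) := by
  rw [sum_mul_sum, sum_product]
  exact sum_congr rfl fun i _ => sum_congr rfl fun j _ => by rw [smul_mul_smul_comm, T_add]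

noncomputable def chiMap : (ℕ →₀ ℤ) →ₗ[ℤ] ℤ[T;T⁻¹] := Finsupp.linearCombination ℤ chi

noncomputable def thetaMap : (ℤ →₀ ℤ) →ₗ[ℤ] ℤ[T;T⁻¹] := Finsupp.linearCombination ℤ thetaChar

-- For `i = -1` the sign vanishes, which absorbs the junk value `(tau (-1)).toNat = 0`.
lemma thMulB_eq_sign_smul (i j : ℤ) :
    thMulB i j = (i + 1).sign •
      ∑ k ∈ range ((tau i).toNat + 1), Finsupp.single (j - (tau i).toNat + 2 * k) (1 : ℤ) := by
  rcases lt_trichotomy (i + 1) 0 with h | h | h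
  · have ht : ((tau i).toNat : ℤ) = tau i := by rw [tau, abs_of_neg h]; omega
    rw [thMulB, if_neg (by omega), if_neg (by omega), ht, Int.sign_eq_neg_one_of_neg h,
      neg_one_smul]
  · rw [thMulB, if_pos (by omega), h, Int.sign_zero, zero_smul]
  · have ht : ((tau i).toNat : ℤ) = i := by rw [tau, abs_of_pos h]; omega
    rw [thMulB, if_neg (by omega), if_pos (by omega), ht, Int.sign_eq_one_of_pos h, one_smul]
    congr 1
    simp only [tau, abs_of_pos h, add_sub_cancel_right]

lemma thetaMap_single (i a : ℤ) : thetaMap (Finsupp.single i a) = a • thetaChar i :=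
  Finsupp.linearCombination_single ℤ a i

lemma thetaMap_th (i : ℤ) : thetaMap (th i) = thetaChar i := by
  rw [th, thetaMap_single, one_smul]

lemma thetaMap_thMulB (i j : ℤ) : thetaMap (thMulB i j) = thetaChar i * thetaChar j := by
  simp only [thMulB_eq_sign_smul, map_smul, map_sum, thetaMap_single, one_smul]
  rw [sum_thetaChar_string, ← smul_mul_assoc]
  rfl

lemma thetaMap_tmul (x y : ℤ →₀ ℤ) : thetaMap (tmul x y) = thetaMap x * thetaMap y := by
  simp only [tmul, map_finsuppSum, map_smul, thetaMap_thMulB]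
  rw [thetaMap, Finsupp.linearCombination_apply, Finsupp.linearCombination_apply, Finsupp.sum_mul]
  refine Finsupp.sum_congr fun i _ => ?_
  rw [Finsupp.mul_sum]
  refine Finsupp.sum_congr fun j _ => ?_
  rw [smul_mul_smul_comm]

lemma chiMap_Lmap (x : ℤ →₀ ℤ) : chiMap (Lmap x) = thetaMap x := by
  rw [Lmap, map_finsuppSum, thetaMap, Finsupp.linearCombination_apply]
  refine Finsupp.sum_congr fun i _ => ?_
  rw [map_smul, chiMap, Finsupp.linearCombination_single, one_smul, thetaChar, mul_smul]

lemma weylDenom_mul_chiMap_coeff (x : ℕ →₀ ℤ) (m : ℕ) :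
    (weylDenom * chiMap x).coeff (m + 1) = x m := by
  have hcoeff : ∀ k : ℕ, (weylDenom * chi k).coeff ((m : ℤ) + 1) = if m = k then 1 else 0 := by
    intro k
    rw [weylDenom_mul_chi, AddMonoidAlgebra.coeff_sub, Finsupp.sub_apply, T_apply, T_apply]
    split_ifs <;> omega
  rw [chiMap, Finsupp.linearCombination_apply, Finsupp.sum, Finset.mul_sum,
    AddMonoidAlgebra.coeff_sum, Finsupp.finsetSum_apply]
  simp only [mul_smul_comm, AddMonoidAlgebra.coeff_smul_apply, hcoeff, smul_eq_mul, mul_boole,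
    sum_ite_eq]
  split_ifs with h
  · rfl
  · exact (Finsupp.notMem_support_iff.1 h).symm

lemma chiMap_injective : Function.Injective chiMap := by
  rw [← LinearMap.ker_eq_bot, LinearMap.ker_eq_bot']
  intro x hx
  ext m
  rw [← weylDenom_mul_chiMap_coeff, hx, mul_zero]
  rfl

lemma Lmap_eq_of_thetaMap_eq {x y : ℤ →₀ ℤ} (h : thetaMap x = thetaMap y) : Lmap x = Lmap y :=
  chiMap_injective (by rw [chiMap_Lmap, chiMap_Lmap, h])

deriving instance DecidableEq for RVT

lemma tau_of_even {b : ℤ} (hb : Even b) : ((tau b).toNat : ℤ) = tau b ∧ Even (tau b) := by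
  obtain ⟨r, rfl⟩ := hb
  rcases abs_cases (r + r + 1) with ⟨h, _⟩ | ⟨h, _⟩ <;> rw [tau, h]
  · exact ⟨by omega, r, by omega⟩
  · exact ⟨by omega, -r - 1, by omega⟩

lemma exists_string_eq_iff {s l : ℤ} {m : ℕ} (hs : Even (s + m)) :
    (∃ k < m + 1, s - m + 2 * (k : ℤ) = l) ↔ Even l ∧ |l - s| ≤ m := by
  obtain ⟨r, hr⟩ := hs
  rw [abs_le]
  constructor
  · rintro ⟨k, hk, rfl⟩
    exact ⟨⟨r - m + k, by omega⟩, by omega, by omega⟩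
  · rintro ⟨⟨q, hq⟩, h₁, h₂⟩
    exact ⟨((l - s + m) / 2).toNat, by omega, by omega⟩

noncomputable def rvTrees : (n : ℕ) → Finset (RVT n)
  | 0 => {.leaf 2}
  | n + 1 => (rvTrees n ×ˢ rvTrees n ×ˢ rvTrees n).biUnion fun p =>
      (range ((tau p.2.1.val).toNat + 1)).image fun k : ℕ =>
        .node (p.1.val + p.2.2.val - (tau p.2.1.val).toNat + 2 * k) p.1 p.2.1 p.2.2

lemma RVT.mem2.even_val {n : ℕ} {t : RVT n} (h : t.mem2) : Even t.val := by
  cases t with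
  | leaf l => exact h.1
  | node l t₁ t₂ t₃ => exact h.1.1

lemma mem_rvTrees : ∀ {n : ℕ} (t : RVT n), t ∈ rvTrees n ↔ t.mem2
  | 0, .leaf l => by
    simp only [rvTrees, mem_singleton, RVT.leaf.injEq, RVT.mem2, RVT.valid, RVT.leaves2]
    exact ⟨fun h => ⟨h ▸ even_two, h⟩, And.right⟩
  | n + 1, .node l t₁ t₂ t₃ => by
    simp only [rvTrees, mem_biUnion, mem_product, mem_image, mem_range, RVT.node.injEq,
      Prod.exists]
    have hlabel : ∀ {t₁ t₂ t₃ : RVT n}, t₁.mem2 → t₂.mem2 → t₃.mem2 →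
        ((∃ k < (tau t₂.val).toNat + 1, t₁.val + t₃.val - (tau t₂.val).toNat + 2 * (k : ℤ) = l) ↔
          Even l ∧ |l - t₁.val - t₃.val| ≤ tau t₂.val) := by
      intro t₁ t₂ t₃ h₁ h₂ h₃
      obtain ⟨hm, hm_even⟩ := tau_of_even h₂.even_val
      rw [exists_string_eq_iff (by rw [hm]; exact (h₁.even_val.add h₃.even_val).add hm_even), hm,
        sub_sub]
    constructor
    · rintro ⟨_, _, _, ⟨h₁, h₂, h₃⟩, k, hk, hl, rfl, rfl, rfl⟩
      rw [mem_rvTrees] at h₁ h₂ h₃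
      obtain ⟨hl_even, hl_abs⟩ := (hlabel h₁ h₂ h₃).1 ⟨k, hk, hl⟩
      exact ⟨⟨hl_even, hl_abs, h₁.1, h₂.1, h₃.1⟩, h₁.2, h₂.2, h₃.2⟩
    · rintro ⟨⟨hl_even, hl_abs, hv₁, hv₂, hv₃⟩, hL₁, hL₂, hL₃⟩
      obtain ⟨k, hk, hl⟩ := (hlabel ⟨hv₁, hL₁⟩ ⟨hv₂, hL₂⟩ ⟨hv₃, hL₃⟩).2 ⟨hl_even, hl_abs⟩
      exact ⟨t₁, t₂, t₃, ⟨(mem_rvTrees t₁).2 ⟨hv₁, hL₁⟩, (mem_rvTrees t₂).2 ⟨hv₂, hL₂⟩,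
        (mem_rvTrees t₃).2 ⟨hv₃, hL₃⟩⟩, k, hk, hl, rfl, rfl, rfl⟩

lemma sum_rvTrees_succ {M : Type*} [AddCommMonoid M] (n : ℕ) (f : RVT (n + 1) → M) :
    ∑ t ∈ rvTrees (n + 1), f t = ∑ t₁ ∈ rvTrees n, ∑ t₂ ∈ rvTrees n, ∑ t₃ ∈ rvTrees n,
      ∑ k ∈ range ((tau t₂.val).toNat + 1),
        f (.node (t₁.val + t₃.val - (tau t₂.val).toNat + 2 * k) t₁ t₂ t₃) := by
  rw [rvTrees, sum_biUnion]
  · simp only [sum_product]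
    refine sum_congr rfl fun t₁ _ => sum_congr rfl fun t₂ _ => sum_congr rfl fun t₃ _ => ?_
    exact sum_image fun k _ k' _ h => by simpa using h
  · intro p _ q _ hpq
    refine disjoint_left.2 fun t ht ht' => hpq ?_
    obtain ⟨k, -, rfl⟩ := mem_image.1 ht
    obtain ⟨k', -, h⟩ := mem_image.1 ht'
    simp only [RVT.node.injEq] at h
    exact (Prod.ext h.2.1 (Prod.ext h.2.2.1 h.2.2.2)).symm

lemma E_eq_sum (n : ℕ) : E n = ∑ t ∈ rvTrees n, t.sgn • th t.val := by
  rw [E, finsum_subtype_eq_finsum_cond (f := fun t : RVT n => t.sgn • th t.val) RVT.mem2]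
  simp only [← mem_rvTrees]
  exact finsum_mem_finset_eq_sum _ _

noncomputable def rvGen (n : ℕ) : ℤ[T;T⁻¹] := ∑ t ∈ rvTrees n, t.sgn • T t.val

noncomputable def thetaSum (n : ℕ) (r : ℤ) : ℤ[T;T⁻¹] :=
  ∑ t ∈ rvTrees n, t.sgn • thetaChar (t.val + r)

noncomputable def pairThetaSum (n : ℕ) (r : ℤ) : ℤ[T;T⁻¹] :=
  ∑ p ∈ rvTrees n ×ˢ rvTrees n, (p.1.sgn * p.2.sgn) • thetaChar (p.1.val + p.2.val + r)

lemma thetaMap_E (n : ℕ) : thetaMap (E n) = thetaSum n 0 := by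
  simp only [E_eq_sum, thetaSum, map_sum, map_zsmul, thetaMap_th, add_zero]

lemma thetaMap_Sm1_E (n : ℕ) : thetaMap (Sm1 (E n)) = thetaSum n (-1) := by
  simp only [E_eq_sum, Sm1, thetaSum, Finsupp.mapDomain_finsetSum, Finsupp.mapDomain_smul, th,
    Finsupp.mapDomain_single, map_sum, map_zsmul, thetaMap_single, one_smul, sub_eq_add_neg]

lemma thetaSum_succ (n : ℕ) (r : ℤ) :
    thetaSum (n + 1) r = thetaSum n 0 * pairThetaSum n r := by
  have hnode : ∀ t₁ t₂ t₃ : RVT n, ∑ k ∈ range ((tau t₂.val).toNat + 1),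
      (RVT.node (t₁.val + t₃.val - (tau t₂.val).toNat + 2 * k) t₁ t₂ t₃).sgn •
        thetaChar ((RVT.node (t₁.val + t₃.val - (tau t₂.val).toNat + 2 * k) t₁ t₂ t₃).val + r)
      = (t₁.sgn * t₂.sgn * t₃.sgn) • (thetaChar t₂.val * thetaChar (t₁.val + t₃.val + r)) := by
    intro t₁ t₂ t₃
    have hshift : ∀ k : ℕ, t₁.val + t₃.val - (tau t₂.val).toNat + 2 * k + r
        = t₁.val + t₃.val + r - (tau t₂.val).toNat + 2 * k := fun k => by ring
    simp only [RVT.sgn, RVT.val.eq_2, hshift]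
    rw [← smul_sum, sum_thetaChar_string,
      show thetaChar t₂.val = (t₂.val + 1).sign • chi (tau t₂.val).toNat from rfl,
      smul_mul_assoc, smul_smul]
    ring_nf
  rw [thetaSum, sum_rvTrees_succ, thetaSum, pairThetaSum, sum_mul_sum, sum_comm]
  simp only [hnode, sum_product, add_zero]
  refine sum_congr rfl fun t₂ _ => sum_congr rfl fun t₁ _ => sum_congr rfl fun t₃ _ => ?_
  rw [smul_mul_smul_comm]
  ring_nf

lemma weylDenom_mul_thetaSum (n : ℕ) (r : ℤ) :
    weylDenom * thetaSum n r = T (r + 1) * rvGen n - T (-(r + 1)) * invert (rvGen n) :=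
  weylDenom_mul_sum_smul_thetaChar _ _ _ r

lemma weylDenom_mul_pairThetaSum (n : ℕ) (r : ℤ) :
    weylDenom * pairThetaSum n r
      = T (r + 1) * rvGen n ^ 2 - T (-(r + 1)) * invert (rvGen n) ^ 2 := by
  rw [pairThetaSum, ← map_pow, rvGen, sq, sum_smul_T_mul_sum_smul_T]
  exact weylDenom_mul_sum_smul_thetaChar (rvTrees n ×ˢ rvTrees n)
    (fun p => p.1.sgn * p.2.sgn) (fun p => p.1.val + p.2.val) r

lemma thetaMap_terr (n : ℕ) :
    thetaMap (terr n).1 = thetaSum n 0 ∧ thetaMap (terr n).2 = thetaSum n (-1) := by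
  induction n with
  | zero => simp [terr, thetaSum, rvTrees, RVT.sgn, RVT.val, thetaMap_th]
  | succ n ih =>
    obtain ⟨ih₁, ih₂⟩ := ih
    have hP := weylDenom_mul_thetaSum n 0
    have hQ := weylDenom_mul_thetaSum n (-1)
    have hΩ := weylDenom_mul_pairThetaSum n 0
    have hΩ' := weylDenom_mul_pairThetaSum n (-1)
    simp only [zero_add, neg_add_cancel, neg_zero, T_zero, one_mul] at hP hQ hΩ hΩ'
    have hxy : (T 1 * T (-1) : ℤ[T;T⁻¹]) = 1 := by rw [← T_add, add_neg_cancel, T_zero]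
    simp only [terr, thetaMap_tmul, map_sub, map_nsmul, thetaMap_th, thetaChar_one, ih₁, ih₂,
      thetaSum_succ]
    constructor
    · rw [← sq_sub_sq_eq_of_mul_sub_eq hxy weylDenom_ne_zero hP hQ hΩ]
      ring
    · rw [← two_mul_sub_add_mul_mul_eq_of_mul_sub_eq weylDenom_ne_zero hP hQ hΩ']
      ring

theorem terr_congr_E (n : ℕ) :
    Lmap ((terr n).1) = Lmap (E n) ∧ Lmap ((terr n).2) = Lmap (Sm1 (E n)) := by
  obtain ⟨h₁, h₂⟩ := thetaMap_terr n
  exact ⟨Lmap_eq_of_thetaMap_eq (h₁.trans (thetaMap_E n).symm),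
    Lmap_eq_of_thetaMap_eq (h₂.trans (thetaMap_Sm1_E n).symm)⟩
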